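/- arXiv:1605.02374 — 2 statements merged into one kernel-verified Lean document; each statement's English description precedes it below -/
import Mathlib

section
/- Let α > 0, d = 1, and define p(α,ρ) = 2αρ/(α+1) − 1 for ρ ∈ ((α+1)/(2α) ∨ 1, (α+1)/α], p(α,ρ) = α(ρ−1) for ρ > (α+1)/α, and p(α,ρ) = 0 for ρ ≤ (α+1)/(2α) ∨ 1. Then for every δ with (α+1)/(4α) ∨ α/(α+1) ∨ 1/2 ≤ δ ≤ (2α+1)/(2α) and every sufficiently large M, the quantity δ ∧ inf_{ρ ∈ [δ, M]} ( p(α,ρ) ∨ (2δ − ρ) ) equals (4αδ − α − 1)/(3α + 1), and the infimum is attained at ρ = (2δ+1)(α+1)/(3α+1). -/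
/-!
The map `ρ ↦ 2δ - ρ` decreases, while to the right of `(α+1)/(2α) ∨ 1` the exponent `p(α,ρ)`
dominates the ramp `2αρ/(α+1) - 1` (capped at `1`), which it equals on the ramp regime. Hence the
infimum of `p(α,ρ) ∨ (2δ - ρ)` is attained where `2δ - ρ` meets the ramp, at
`ρ* = (2δ+1)(α+1)/(3α+1)`, with value `q = (4αδ-α-1)/(3α+1)`. The constraints on `δ` place this
critical scale `ρ*` in the ramp regime and above `δ`; then `q = 2δ - ρ* ≤ δ`. At `ρ* = 1`, where `p`
jumps, `p(α,ρ*)` may fall below `q`, which is why only `p(α,ρ*) ≤ q` is used there.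
-/

/-- The tail exponent `p(α,ρ)` for `d = 1` (Theorem 2.2), extended by `0`
below the first regime. -/
noncomputable def pExp (α ρ : ℝ) : ℝ :=
  if ρ ≤ max ((α + 1) / (2 * α)) 1 then 0
  else if ρ ≤ (α + 1) / α then 2 * α * ρ / (α + 1) - 1
  else α * (ρ - 1)

open Set

lemma isLeast_image_max_of_antitone {ι β : Type*} [LinearOrder ι] [LinearOrder β]
    {f g : ι → β} (hg : Antitone g) {s : Set ι} {x₀ : ι} (hx₀ : x₀ ∈ s)
    (hfx₀ : f x₀ ≤ g x₀) (hf : ∀ x ∈ s, x₀ < x → g x₀ ≤ f x) :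
    IsLeast ((fun x => max (f x) (g x)) '' s) (g x₀) := by
  refine ⟨⟨x₀, hx₀, max_eq_right hfx₀⟩, ?_⟩
  rintro _ ⟨x, hx, rfl⟩
  rcases le_or_gt x x₀ with hle | hlt
  · exact (hg hle).trans (le_max_right _ _)
  · exact (hf x hx hlt).trans (le_max_left _ _)

section pExp

variable {α ρ : ℝ}

lemma pExp_le_ramp (hα : 0 < α) (h₁ : (α + 1) / (2 * α) ≤ ρ) (h₂ : ρ ≤ (α + 1) / α) :
    pExp α ρ ≤ 2 * α * ρ / (α + 1) - 1 := by
  have hramp : 0 ≤ 2 * α * ρ / (α + 1) - 1 := by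
    rw [div_le_iff₀ (by positivity)] at h₁
    rw [sub_nonneg, le_div_iff₀ (by positivity)]
    linarith
  unfold pExp
  split_ifs
  exacts [hramp, le_rfl]

lemma min_ramp_one_le_pExp (hα : 0 < α) (h : max ((α + 1) / (2 * α)) 1 < ρ) :
    min (2 * α * ρ / (α + 1) - 1) 1 ≤ pExp α ρ := by
  unfold pExp
  rw [if_neg h.not_ge]
  split_ifs with hρ
  · exact min_le_left _ _
  · rw [not_le, div_lt_iff₀ hα] at hρ
    exact (min_le_right _ _).trans (by linarith)

lemma ramp_le_pExp_of_lt {ρ₀ : ℝ} (hα : 0 < α) (h₁ : max ((α + 1) / (2 * α)) 1 ≤ ρ₀)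
    (h₂ : ρ₀ ≤ (α + 1) / α) (hρ : ρ₀ < ρ) : 2 * α * ρ₀ / (α + 1) - 1 ≤ pExp α ρ := by
  refine le_trans (le_min ?_ ?_) (min_ramp_one_le_pExp hα (h₁.trans_lt hρ))
  · gcongr
  · calc 2 * α * ρ₀ / (α + 1) - 1 ≤ 2 * α * ((α + 1) / α) / (α + 1) - 1 := by gcongr
      _ = 1 := by field_simp; ring

end pExp

section CriticalScale

variable {α δ : ℝ}

lemma two_mul_sub_criticalScale (hα : 0 < α) :
    2 * δ - (2 * δ + 1) * (α + 1) / (3 * α + 1) = (4 * α * δ - α - 1) / (3 * α + 1) := by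
  field_simp
  ring

lemma ramp_criticalScale (hα : 0 < α) :
    2 * α * ((2 * δ + 1) * (α + 1) / (3 * α + 1)) / (α + 1) - 1 =
      (4 * α * δ - α - 1) / (3 * α + 1) := by
  field_simp
  ring

lemma criticalScale_bounds (hα : 0 < α) (h₁ : (α + 1) / (4 * α) ≤ δ) (h₂ : α / (α + 1) ≤ δ)
    (h₃ : δ ≤ (2 * α + 1) / (2 * α)) :
    δ ≤ (2 * δ + 1) * (α + 1) / (3 * α + 1) ∧
      max ((α + 1) / (2 * α)) 1 ≤ (2 * δ + 1) * (α + 1) / (3 * α + 1) ∧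
      (2 * δ + 1) * (α + 1) / (3 * α + 1) ≤ (α + 1) / α := by
  rw [div_le_iff₀ (by positivity)] at h₁ h₂
  rw [le_div_iff₀ (by positivity)] at h₃
  refine ⟨?_, max_le ?_ ?_, ?_⟩
  · rw [le_div_iff₀ (by positivity)]
    nlinarith
  · rw [div_le_div_iff₀ (by positivity) (by positivity)]
    nlinarith
  · rw [le_div_iff₀ (by positivity)]
    nlinarith
  · rw [div_le_div_iff₀ (by positivity) (by positivity)]
    nlinarith

end CriticalScale

/-- Exponent computation in the third regime of Theorem 2.5 for `d = 1`:
for `(α+1)/(4α) ∨ α/(α+1) ∨ 1/2 ≤ δ ≤ (2α+1)/(2α)` and `M` large,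
`δ ∧ inf_{ρ ∈ [δ,M]} (p(α,ρ) ∨ (2δ−ρ)) = (4αδ−α−1)/(3α+1)`, attained at
`ρ = (2δ+1)(α+1)/(3α+1)`. -/
theorem displacement_exponent_third_regime
    (α δ : ℝ) (hα : 0 < α)
    (hδ₁ : max ((α + 1) / (4 * α)) (max (α / (α + 1)) (1 / 2)) ≤ δ)
    (hδ₂ : δ ≤ (2 * α + 1) / (2 * α)) :
    ∃ M₀ : ℝ, ∀ M ≥ M₀,
      min δ (sInf ((fun ρ => max (pExp α ρ) (2 * δ - ρ)) '' Set.Icc δ M)) =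
        (4 * α * δ - α - 1) / (3 * α + 1) ∧
      (2 * δ + 1) * (α + 1) / (3 * α + 1) ∈ Set.Icc δ M ∧
      max (pExp α ((2 * δ + 1) * (α + 1) / (3 * α + 1)))
          (2 * δ - (2 * δ + 1) * (α + 1) / (3 * α + 1)) =
        sInf ((fun ρ => max (pExp α ρ) (2 * δ - ρ)) '' Set.Icc δ M) := by
  obtain ⟨h₁, h₂, -⟩ : (α + 1) / (4 * α) ≤ δ ∧ α / (α + 1) ≤ δ ∧ 1 / 2 ≤ δ := by
    simpa only [max_le_iff] using hδ₁
  obtain ⟨hδρ, hρ_lo, hρ_hi⟩ := criticalScale_bounds hα h₁ h₂ hδ₂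
  set ρ := (2 * δ + 1) * (α + 1) / (3 * α + 1)
  set q := (4 * α * δ - α - 1) / (3 * α + 1)
  have hq : 2 * δ - ρ = q := two_mul_sub_criticalScale hα
  have hℓ : 2 * α * ρ / (α + 1) - 1 = q := ramp_criticalScale hα
  have hpρ : pExp α ρ ≤ q :=
    hℓ ▸ pExp_le_ramp hα ((le_max_left _ _).trans hρ_lo) hρ_hi
  have hleast : ∀ M ≥ ρ, IsLeast ((fun ρ => max (pExp α ρ) (2 * δ - ρ)) '' Icc δ M) q :=
    fun M hM => hq ▸ isLeast_image_max_of_antitone (fun _ _ h => sub_le_sub_left h _) ⟨hδρ, hM⟩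
      (hq ▸ hpρ) fun x _ hx => hq ▸ hℓ ▸ ramp_le_pExp_of_lt hα hρ_lo hρ_hi hx
  refine ⟨ρ, fun M hM => ⟨?_, ⟨hδρ, hM⟩, ?_⟩⟩
  · rw [(hleast M hM).csInf_eq]
    exact min_eq_right (by linarith)
  · rw [(hleast M hM).csInf_eq, hq]
    exact max_eq_right hpρ
end

section
/- Let α > 0, d = 1, and p(α,ρ) as in the previous context. For every δ with (2α+1)/(2α) < δ < α/(α−1)_+ (with the convention α/0 = ∞) and sufficiently large M, the quantity δ ∧ inf_{ρ ∈ [δ, M]} ( p(α,ρ) ∨ (2δ − ρ) ) equals α(2δ − 1)/(α + 1), and the infimum is attained at ρ = (2δ + α)/(α + 1), which lies in ((α+1)/α, M]. -/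
/-! The objective `ρ ↦ p(α,ρ) ∨ (2δ − ρ)` is the maximum of a function that is increasing
in the third regime `ρ > (α+1)/α`, where `p(α,ρ) = α(ρ − 1)`, and the decreasing line
`2δ − ρ`. Its minimum is therefore attained where the two cross, at
`ρ* = (2δ+α)/(α+1)`, with value `α(2δ−1)/(α+1)`. The lower bound on `δ` puts `ρ*` in the
third regime, and the upper bound, equivalent to `δ(α−1) < α`, gives both `δ < ρ*` (so
`ρ*` is admissible) and `α(2δ−1)/(α+1) < δ` (so the outer minimum with `δ` is inactive). -/

lemma isLeast_image_max_of_crossing {ι β : Type*} [LinearOrder ι] [LinearOrder β]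
    {f g : ι → β} {s : Set ι} {c : ι} (hc : c ∈ s) (hfg : f c = g c)
    (hf : ∀ r ∈ s, c < r → f c ≤ f r) (hg : ∀ r ∈ s, r ≤ c → g c ≤ g r) :
    IsLeast ((fun r => max (f r) (g r)) '' s) (max (f c) (g c)) := by
  refine ⟨⟨c, hc, rfl⟩, ?_⟩
  rintro _ ⟨r, hr, rfl⟩
  rw [← hfg, max_self]
  rcases le_or_gt r c with hrc | hcr
  · exact hfg ▸ le_max_of_le_right (hg r hr hrc)
  · exact le_max_of_le_left (hf r hr hcr)

section Exponents

variable {α δ : ℝ}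

lemma pExp_of_lt (hα : 0 < α) {ρ : ℝ} (hρ : (α + 1) / α < ρ) :
    pExp α ρ = α * (ρ - 1) := by
  have hmax : max ((α + 1) / (2 * α)) 1 ≤ (α + 1) / α :=
    max_le (by gcongr; linarith) (by rw [le_div_iff₀ hα]; linarith)
  rw [pExp, if_neg (hmax.trans_lt hρ).not_ge, if_neg hρ.not_ge]

lemma mul_sub_one_lt_of_lt_div (hα : 0 < α) (hδ : 0 ≤ δ) (h : 1 < α → δ < α / (α - 1)) :
    δ * (α - 1) < α := by
  rcases le_or_gt α 1 with hα1 | hα1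
  · nlinarith
  · exact (lt_div_iff₀ (by linarith)).1 (h hα1)

lemma succ_div_lt_crossing (hα : 0 < α) (hδ : (2 * α + 1) / (2 * α) < δ) :
    (α + 1) / α < (2 * δ + α) / (α + 1) := by
  rw [div_lt_iff₀ (by linarith)] at hδ
  rw [div_lt_div_iff₀ hα (by linarith)]
  nlinarith

lemma lt_crossing (hα : 0 < α + 1) (hδ : δ * (α - 1) < α) :
    δ < (2 * δ + α) / (α + 1) := by
  rw [lt_div_iff₀ hα]
  linarith

lemma crossing_value_lt (hα : 0 < α + 1) (hδ : δ * (α - 1) < α) :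
    α * (2 * δ - 1) / (α + 1) < δ := by
  rw [div_lt_iff₀ hα]
  linarith

lemma mul_crossing_sub_one (hα : α + 1 ≠ 0) :
    α * ((2 * δ + α) / (α + 1) - 1) = α * (2 * δ - 1) / (α + 1) := by
  field_simp
  ring

lemma two_mul_sub_crossing (hα : α + 1 ≠ 0) :
    2 * δ - (2 * δ + α) / (α + 1) = α * (2 * δ - 1) / (α + 1) := by
  field_simp
  ring

end Exponents

/-- Exponent computation in the fourth regime of Theorem 2.5 for `d = 1`:
for `(2α+1)/(2α) < δ < α/(α−1)₊` (with `α/0 = ∞`) and `M` large,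
`δ ∧ inf_{ρ ∈ [δ,M]} (p(α,ρ) ∨ (2δ−ρ)) = α(2δ−1)/(α+1)`, attained at
`ρ = (2δ+α)/(α+1) ∈ ((α+1)/α, M]`. -/
theorem displacement_exponent_fourth_regime
    (α δ : ℝ) (hα : 0 < α)
    (hδ₁ : (2 * α + 1) / (2 * α) < δ)
    (hδ₂ : 1 < α → δ < α / (α - 1)) :
    ∃ M₀ : ℝ, ∀ M ≥ M₀,
      min δ (sInf ((fun ρ => max (pExp α ρ) (2 * δ - ρ)) '' Set.Icc δ M)) =
        α * (2 * δ - 1) / (α + 1) ∧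
      (2 * δ + α) / (α + 1) ∈ Set.Icc δ M ∧
      (2 * δ + α) / (α + 1) ∈ Set.Ioc ((α + 1) / α) M ∧
      max (pExp α ((2 * δ + α) / (α + 1))) (2 * δ - (2 * δ + α) / (α + 1)) =
        sInf ((fun ρ => max (pExp α ρ) (2 * δ - ρ)) '' Set.Icc δ M) := by
  have hδ : δ * (α - 1) < α :=
    mul_sub_one_lt_of_lt_div hα ((div_pos (by linarith) (by linarith)).trans hδ₁).le hδ₂
  have hα₁ : 0 < α + 1 := by linarith
  set ρ := (2 * δ + α) / (α + 1)
  have hρ : (α + 1) / α < ρ := succ_div_lt_crossing hα hδ₁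
  have hpρ : pExp α ρ = α * (2 * δ - 1) / (α + 1) := by
    rw [pExp_of_lt hα hρ, mul_crossing_sub_one hα₁.ne']
  refine ⟨ρ, fun M hM => ?_⟩
  have hmem : ρ ∈ Set.Icc δ M := ⟨(lt_crossing hα₁ hδ).le, hM⟩
  have hinf := (isLeast_image_max_of_crossing (f := pExp α) (g := (2 * δ - ·)) hmem
    (hpρ.trans (two_mul_sub_crossing hα₁.ne').symm)
    (fun r _ hr => by
      rw [pExp_of_lt hα hρ, pExp_of_lt hα (hρ.trans hr)]
      gcongr)
    (fun r _ hr => by linarith)).csInf_eq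
  refine ⟨?_, hmem, ⟨hρ, hM⟩, hinf.symm⟩
  rw [hinf, hpρ, two_mul_sub_crossing hα₁.ne', max_self,
    min_eq_right (crossing_value_lt hα₁ hδ).le]
end
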